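/- arXiv:1501.04826 — 2 statements merged into one kernel-verified Lean document; each statement's English description precedes it below -/
import Mathlib

section
/- Let γ be a confidence parameter with 1/2 ≤ γ < 1 and let X₀ → Y₀, X₁ → Y₁ and X₂ → Y₂ be three partial implications over the attribute set [n]. Then the following are equivalent: (1) X₁ → Y₁, X₂ → Y₂ ⊨_γ X₀ → Y₀; (2) either Y₀ ⊆ X₀, or for some i ∈ {1,2} both X_i ⊆ X₀ and X₀Y₀ ⊆ X_iY_i, or all seven inclusions hold simultaneously: X₁ ⊆ X₂Y₂, X₂ ⊆ X₁Y₁, X₁ ⊆ X₀, X₂ ⊆ X₀, X₀ ⊆ X₁X₂Y₁Y₂, Y₀ ⊆ X₀Y₁, and Y₀ ⊆ X₀Y₂. -/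
open Finset

/-- Number of transactions in the dataset `D` that cover `X`, counted with multiplicity. -/
def cntD {n : ℕ} (D : Multiset (Finset (Fin n))) (X : Finset (Fin n)) : ℕ :=
  (D.filter (fun Z => X ⊆ Z)).card

/-- `D ⊨_γ X → Y` : either no transaction covers `X`, or the confidence of `X → Y` is ≥ γ. -/
def satPI {n : ℕ} (γ : ℝ) (D : Multiset (Finset (Fin n))) (X Y : Finset (Fin n)) : Prop :=
  cntD D X = 0 ∨ γ * (cntD D X : ℝ) ≤ (cntD D (X ∪ Y) : ℝ)

/-- Entailment at confidence threshold γ from the premises indexed by `L`. -/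
def entailsFrom {n k : ℕ} (γ : ℝ) (P : Fin k → Finset (Fin n) × Finset (Fin n))
    (L : Finset (Fin k)) (X₀ Y₀ : Finset (Fin n)) : Prop :=
  ∀ D : Multiset (Finset (Fin n)),
    (∀ i ∈ L, satPI γ D (P i).1 (P i).2) → satPI γ D X₀ Y₀

/-- Proper entailment from the premises indexed by `L`: the entailment holds,
and it fails from every proper subset of the premises. -/
def properFrom {n k : ℕ} (γ : ℝ) (P : Fin k → Finset (Fin n) × Finset (Fin n))
    (L : Finset (Fin k)) (X₀ Y₀ : Finset (Fin n)) : Prop :=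
  entailsFrom γ P L X₀ Y₀ ∧ ∀ L' ⊂ L, ¬ entailsFrom γ P L' X₀ Y₀

/-- The weight `w_Z(X → Y)`: `1-γ` if `Z` witnesses, `-γ` if `Z` violates, `0` otherwise. -/
noncomputable def wt {n : ℕ} (γ : ℝ) (Z X Y : Finset (Fin n)) : ℝ :=
  if X ∪ Y ⊆ Z then 1 - γ else if X ⊆ Z then -γ else 0

/-- The premises indexed by `L` enforce homogeneity. -/
def homogFrom {n k : ℕ} (P : Fin k → Finset (Fin n) × Finset (Fin n))
    (L : Finset (Fin k)) : Prop :=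
  ∀ Z : Finset (Fin n),
    (∀ i ∈ L, ¬ (P i).1 ⊆ Z ∨ (P i).1 ∪ (P i).2 ⊆ Z) →
    ((∀ i ∈ L, ¬ (P i).1 ⊆ Z) ∨ (∀ i ∈ L, (P i).1 ∪ (P i).2 ⊆ Z))

/-- The critical threshold `γ*({Xᵢ → Yᵢ : i ∈ L}, X)`. -/
noncomputable def gammaStar {n k : ℕ} (P : Fin k → Finset (Fin n) × Finset (Fin n))
    (L : Finset (Fin k)) (X : Finset (Fin n)) : ℝ :=
  sInf { r : ℝ | ∃ lam : Fin k → ℝ, (∀ i ∈ L, 0 ≤ lam i) ∧ (∑ i ∈ L, lam i) = 1 ∧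
    r = (Finset.univ.filter (fun Z : Finset (Fin n) => ¬ X ⊆ Z)).fold max 0
          (fun Z => (∑ i ∈ L.filter (fun i => (P i).1 ∪ (P i).2 ⊆ Z), lam i) /
                    (∑ i ∈ L.filter (fun i => (P i).1 ⊆ Z), lam i)) }

/-!
Soundness. The one-premise cases are monotonicity of `cntD`. Under the seven inclusions every
transaction `Z` satisfies `[X₁Y₁ ⊆ Z] + [X₂Y₂ ⊆ Z] + [X₀ ⊆ Z] ≤ 2 [X₀Y₀ ⊆ Z] + [X₁X₂ ⊆ Z]`;
summing over `D` and inserting both premises gives `2 C[X₀Y₀] ≥ (2γ - 1) C[X₁X₂] + C[X₀]`,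
which is at least `2γ C[X₀]` because `γ ≥ 1/2` and `C[X₁X₂] ≥ C[X₀]`.

Completeness. If `Y₀ ⊄ X₀` and neither premise entails the conclusion on its own, each of the
seven inclusions is forced: its failure is witnessed by a dataset with at most three distinct
transactions, whose multiplicities are tuned to `γ` through the natural number `r` with
`r / (r + 1) < γ ≤ (r + 1) / (r + 2)`.
-/

section Counting

variable {n : ℕ}

theorem cntD_add (D₁ D₂ : Multiset (Finset (Fin n))) (X : Finset (Fin n)) :
    cntD (D₁ + D₂) X = cntD D₁ X + cntD D₂ X := by
  simp [cntD, Multiset.filter_add]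

theorem cntD_replicate (a : ℕ) (A X : Finset (Fin n)) :
    cntD (Multiset.replicate a A) X = if X ⊆ A then a else 0 := by
  unfold cntD
  split_ifs with h
  · rw [Multiset.filter_eq_self.2 fun Z hZ => Multiset.eq_of_mem_replicate hZ ▸ h,
      Multiset.card_replicate]
  · rw [Multiset.filter_eq_nil.2 fun Z hZ => Multiset.eq_of_mem_replicate hZ ▸ h,
      Multiset.card_zero]

theorem cntD_singleton (A X : Finset (Fin n)) : cntD {A} X = if X ⊆ A then 1 else 0 := by
  simpa using cntD_replicate 1 A X

theorem cntD_antitone (D : Multiset (Finset (Fin n))) {X X' : Finset (Fin n)} (h : X ⊆ X') :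
    cntD D X' ≤ cntD D X :=
  Multiset.card_le_card (Multiset.monotone_filter_right _ fun _ hZ => h.trans hZ)

variable {γ : ℝ} {D : Multiset (Finset (Fin n))} {X Y : Finset (Fin n)}

theorem satPI_iff : satPI γ D X Y ↔ γ * cntD D X ≤ cntD D (X ∪ Y) := by
  refine ⟨?_, Or.inr⟩
  rintro (h | h)
  · simp [h]
  · exact h

theorem satPI_of_le {m k : ℕ} (hγ : 0 ≤ γ) (hm : cntD D X ≤ m) (hk : k ≤ cntD D (X ∪ Y))
    (h : γ * m ≤ k) : satPI γ D X Y := by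
  rw [satPI_iff]
  calc γ * cntD D X ≤ γ * m := by gcongr
    _ ≤ k := h
    _ ≤ cntD D (X ∪ Y) := by exact_mod_cast hk

theorem not_satPI_of_le {m k : ℕ} (hγ : 0 ≤ γ) (hm : m ≤ cntD D X) (hk : cntD D (X ∪ Y) ≤ k)
    (h : k < γ * m) : ¬ satPI γ D X Y := by
  rw [satPI_iff, not_le]
  calc (cntD D (X ∪ Y) : ℝ) ≤ k := by exact_mod_cast hk
    _ < γ * m := h
    _ ≤ γ * cntD D X := by gcongr

theorem satPI_of_subset (hγ : γ ≤ 1) (h : Y ⊆ X) : satPI γ D X Y := by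
  rw [satPI_iff, union_eq_left.mpr h]
  exact mul_le_of_le_one_left (Nat.cast_nonneg _) hγ

theorem satPI.weaken {X₀ Y₀ : Finset (Fin n)} (hγ : 0 ≤ γ) (hX : X ⊆ X₀)
    (hXY : X₀ ∪ Y₀ ⊆ X ∪ Y) (h : satPI γ D X Y) : satPI γ D X₀ Y₀ := by
  rw [satPI_iff] at h ⊢
  calc γ * cntD D X₀ ≤ γ * cntD D X := by gcongr; exact cntD_antitone D hX
    _ ≤ cntD D (X ∪ Y) := h
    _ ≤ cntD D (X₀ ∪ Y₀) := by exact_mod_cast cntD_antitone D hXY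

end Counting

theorem exists_nat_lt_mul_le_add {c x : ℝ} (hc : 0 < c) (hx : 0 ≤ x) :
    ∃ m : ℕ, x < c * m ∧ c * m ≤ x + c := by
  refine ⟨⌊x / c⌋₊ + 1, ?_, ?_⟩
  · have := Nat.lt_floor_add_one (x / c)
    rw [div_lt_iff₀ hc] at this
    push_cast
    linarith
  · have := Nat.floor_le (div_nonneg hx hc.le)
    rw [le_div_iff₀ hc] at this
    push_cast
    linarith

theorem exists_nat_div_succ_lt_le {γ : ℝ} (hγ0 : 0 < γ) (hγ1 : γ < 1) :
    ∃ r : ℕ, (r : ℝ) < γ * (r + 1) ∧ γ * (r + 2) ≤ r + 1 := by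
  have h1γ : 0 < 1 - γ := by linarith
  obtain ⟨r, hr⟩ : ∃ r : ℕ, ⌈γ / (1 - γ)⌉₊ = r + 1 :=
    Nat.exists_eq_add_one_of_ne_zero (Nat.ceil_pos.mpr (by positivity)).ne'
  have hle := Nat.le_ceil (γ / (1 - γ))
  have hlt := Nat.ceil_lt_add_one (div_nonneg hγ0.le h1γ.le)
  rw [hr, div_le_iff₀ h1γ] at hle
  rw [hr] at hlt
  push_cast at hle hlt
  have hrγ : (r : ℝ) < γ / (1 - γ) := by linarith
  rw [lt_div_iff₀ h1γ] at hrγ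
  exact ⟨r, by linarith, by linarith⟩

section TwoPremises

variable {n : ℕ} {X₀ Y₀ X₁ Y₁ X₂ Y₂ : Finset (Fin n)}

theorem cntD_add_cntD_add_cntD_le (h₁ : X₁ ⊆ X₂ ∪ Y₂) (h₂ : X₂ ⊆ X₁ ∪ Y₁) (h₃ : X₁ ⊆ X₀)
    (h₄ : X₂ ⊆ X₀) (h₅ : X₀ ⊆ X₁ ∪ X₂ ∪ Y₁ ∪ Y₂) (h₆ : Y₀ ⊆ X₀ ∪ Y₁) (h₇ : Y₀ ⊆ X₀ ∪ Y₂)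
    (D : Multiset (Finset (Fin n))) :
    cntD D (X₁ ∪ Y₁) + cntD D (X₂ ∪ Y₂) + cntD D X₀ ≤
      2 * cntD D (X₀ ∪ Y₀) + cntD D (X₁ ∪ X₂) := by
  induction D using Multiset.induction_on with
  | empty => simp [cntD]
  | cons Z D ih =>
    simp only [← Multiset.singleton_add, cntD_add, cntD_singleton]
    have e₁ : X₂ ⊆ Z → Y₂ ⊆ Z → X₁ ⊆ Z := fun h h' => h₁.trans (union_subset h h')
    have e₂ : X₁ ⊆ Z → Y₁ ⊆ Z → X₂ ⊆ Z := fun h h' => h₂.trans (union_subset h h')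
    have e₃ : X₀ ⊆ Z → X₁ ⊆ Z := h₃.trans
    have e₄ : X₀ ⊆ Z → X₂ ⊆ Z := h₄.trans
    have e₅ : X₁ ⊆ Z → X₂ ⊆ Z → Y₁ ⊆ Z → Y₂ ⊆ Z → X₀ ⊆ Z := fun h h' h'' h''' =>
      h₅.trans (union_subset (union_subset (union_subset h h') h'') h''')
    have e₆ : X₀ ⊆ Z → Y₁ ⊆ Z → Y₀ ⊆ Z := fun h h' => h₆.trans (union_subset h h')
    have e₇ : X₀ ⊆ Z → Y₂ ⊆ Z → Y₀ ⊆ Z := fun h h' => h₇.trans (union_subset h h')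
    simp only [union_subset_iff]
    split_ifs <;> simp_all <;> omega

theorem satPI_of_two_premises {γ : ℝ} (hγ : 1 / 2 ≤ γ) (h₁ : X₁ ⊆ X₂ ∪ Y₂)
    (h₂ : X₂ ⊆ X₁ ∪ Y₁) (h₃ : X₁ ⊆ X₀) (h₄ : X₂ ⊆ X₀) (h₅ : X₀ ⊆ X₁ ∪ X₂ ∪ Y₁ ∪ Y₂)
    (h₆ : Y₀ ⊆ X₀ ∪ Y₁) (h₇ : Y₀ ⊆ X₀ ∪ Y₂) {D : Multiset (Finset (Fin n))}
    (hs₁ : satPI γ D X₁ Y₁) (hs₂ : satPI γ D X₂ Y₂) : satPI γ D X₀ Y₀ := by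
  rw [satPI_iff] at hs₁ hs₂ ⊢
  have hcount : (cntD D (X₁ ∪ Y₁) + cntD D (X₂ ∪ Y₂) + cntD D X₀ : ℝ) ≤
      2 * cntD D (X₀ ∪ Y₀) + cntD D (X₁ ∪ X₂) := by
    exact_mod_cast cntD_add_cntD_add_cntD_le h₁ h₂ h₃ h₄ h₅ h₆ h₇ D
  have hX₁ : (cntD D (X₁ ∪ X₂) : ℝ) ≤ cntD D X₁ := by
    exact_mod_cast cntD_antitone D subset_union_left
  have hX₂ : (cntD D (X₁ ∪ X₂) : ℝ) ≤ cntD D X₂ := by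
    exact_mod_cast cntD_antitone D subset_union_right
  have hX₀ : (cntD D X₀ : ℝ) ≤ cntD D (X₁ ∪ X₂) := by
    exact_mod_cast cntD_antitone D (union_subset h₃ h₄)
  linarith [mul_le_mul_of_nonneg_left hX₁ (by linarith : (0 : ℝ) ≤ γ),
    mul_le_mul_of_nonneg_left hX₂ (by linarith : (0 : ℝ) ≤ γ),
    mul_le_mul_of_nonneg_left hX₀ (by linarith : (0 : ℝ) ≤ 2 * γ - 1)]

end TwoPremises

def Entails₂ {n : ℕ} (γ : ℝ) (X₁ Y₁ X₂ Y₂ X₀ Y₀ : Finset (Fin n)) : Prop :=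
  ∀ D : Multiset (Finset (Fin n)), satPI γ D X₁ Y₁ → satPI γ D X₂ Y₂ → satPI γ D X₀ Y₀

namespace Entails₂

variable {n : ℕ} {γ : ℝ} {X₀ Y₀ X₁ Y₁ X₂ Y₂ : Finset (Fin n)}

theorem swap (h : Entails₂ γ X₁ Y₁ X₂ Y₂ X₀ Y₀) : Entails₂ γ X₂ Y₂ X₁ Y₁ X₀ Y₀ :=
  fun D h₂ h₁ => h D h₁ h₂

theorem left_or_right_antecedent_subset (h : Entails₂ γ X₁ Y₁ X₂ Y₂ X₀ Y₀) (hγ : 0 < γ)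
    (hY₀ : ¬ Y₀ ⊆ X₀) : X₁ ⊆ X₀ ∨ X₂ ⊆ X₀ := by
  by_contra! hX
  have hsat {X Y : Finset (Fin n)} (hX : ¬ X ⊆ X₀) : satPI γ {X₀} X Y :=
    Or.inl (by simp [cntD_singleton, hX])
  refine not_satPI_of_le (m := 1) (k := 0) hγ.le ?_ ?_ (by simpa using hγ)
    (h {X₀} (hsat hX.1) (hsat hX.2))
  · simp [cntD_singleton]
  · simp [cntD_singleton, union_subset_iff, hY₀]

theorem subset_union (h : Entails₂ γ X₁ Y₁ X₂ Y₂ X₀ Y₀) (hγ0 : 0 < γ) (hγ1 : γ < 1)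
    (hY₀ : ¬ Y₀ ⊆ X₀) : X₀ ⊆ X₁ ∪ X₂ ∪ Y₁ ∪ Y₂ := by
  by_contra hU
  obtain ⟨r, -, hr⟩ := exists_nat_div_succ_lt_le hγ0 hγ1
  set U := X₁ ∪ X₂ ∪ Y₁ ∪ Y₂
  set D := {X₀} + Multiset.replicate (r + 1) U
  have hsat {X Y : Finset (Fin n)} (hXY : X ∪ Y ⊆ U) : satPI γ D X Y := by
    refine satPI_of_le (m := 1 + (r + 1)) (k := r + 1) hγ0.le ?_ ?_ (by push_cast; linarith)
    · simp only [D, cntD_add, cntD_singleton, cntD_replicate]; split_ifs <;> omega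
    · simp only [D, cntD_add, cntD_singleton, cntD_replicate, if_pos hXY]; omega
  refine not_satPI_of_le (m := 1) (k := 0) hγ0.le ?_ ?_ (by simpa using hγ0)
    (h D (hsat (by grind)) (hsat (by grind)))
  · simp only [D, cntD_add, cntD_singleton, if_pos (subset_refl X₀)]; omega
  · simp only [D, cntD_add, cntD_singleton, cntD_replicate,
      if_neg fun h' => hY₀ (subset_union_right.trans h'),
      if_neg fun h' => hU (subset_union_left.trans h')]
    omega

theorem right_antecedent_subset (h : Entails₂ γ X₁ Y₁ X₂ Y₂ X₀ Y₀) (hγ0 : 0 < γ) (hγ1 : γ < 1)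
    (hY₀ : ¬ Y₀ ⊆ X₀) (h₁ : ¬ X₀ ∪ Y₀ ⊆ X₁ ∪ Y₁) : X₂ ⊆ X₀ := by
  by_contra hX₂
  have hU := h.subset_union hγ0 hγ1 hY₀
  obtain ⟨r, -, hr⟩ := exists_nat_div_succ_lt_le hγ0 hγ1
  obtain ⟨p, hp, hp'⟩ :=
    exists_nat_lt_mul_le_add hγ0 (x := (1 - γ) * ((r + 1) * (r + 1))) (by nlinarith)
  set U := X₁ ∪ X₂ ∪ Y₁ ∪ Y₂
  set D := Multiset.replicate p X₀ + Multiset.replicate (r + 1) (X₁ ∪ Y₁) +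
    Multiset.replicate ((r + 1) * (r + 1)) U
  have hsat₁ : satPI γ D X₁ Y₁ := by
    refine satPI_of_le (m := p + (r + 1) + (r + 1) * (r + 1))
      (k := (r + 1) + (r + 1) * (r + 1)) hγ0.le ?_ ?_ (by push_cast; nlinarith)
    · simp only [D, cntD_add, cntD_replicate]; split_ifs <;> omega
    · simp only [D, cntD_add, cntD_replicate, if_pos (subset_refl _),
        if_pos (show X₁ ∪ Y₁ ⊆ U by grind)]
      split_ifs <;> omega
  have hsat₂ : satPI γ D X₂ Y₂ := by
    refine satPI_of_le (m := (r + 1) + (r + 1) * (r + 1)) (k := (r + 1) * (r + 1))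
      hγ0.le ?_ ?_ (by push_cast; nlinarith)
    · simp only [D, cntD_add, cntD_replicate, if_neg hX₂]; split_ifs <;> omega
    · simp only [D, cntD_add, cntD_replicate, if_pos (show X₂ ∪ Y₂ ⊆ U by grind)]
      split_ifs <;> omega
  refine not_satPI_of_le (m := p + (r + 1) * (r + 1)) (k := (r + 1) * (r + 1)) hγ0.le ?_ ?_
    (by push_cast; nlinarith) (h D hsat₁ hsat₂)
  · simp only [D, cntD_add, cntD_replicate, if_pos (subset_refl _), if_pos hU]
    split_ifs <;> omega
  · simp only [D, cntD_add, cntD_replicate, if_neg h₁,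
      if_neg fun h' => hY₀ (subset_union_right.trans h')]
    split_ifs <;> omega

theorem consequent_subset_left (h : Entails₂ γ X₁ Y₁ X₂ Y₂ X₀ Y₀) (hγ0 : 0 < γ) (hγ1 : γ < 1)
    (hX₁ : X₁ ⊆ X₀) (h₂ : ¬ X₀ ∪ Y₀ ⊆ X₂ ∪ Y₂) : Y₀ ⊆ X₀ ∪ Y₁ := by
  by_contra hY₀
  obtain ⟨r, hr, hr'⟩ := exists_nat_div_succ_lt_le hγ0 hγ1
  have hX₀ : X₀ ⊆ X₀ ∪ Y₁ := subset_union_left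
  set D := {X₀ ∪ Y₁} + {X₂ ∪ Y₂} + Multiset.replicate r (X₀ ∪ Y₁ ∪ (X₂ ∪ Y₂))
  have hsat {X Y : Finset (Fin n)} (hXY : X ∪ Y ⊆ X₀ ∪ Y₁ ∨ X ∪ Y ⊆ X₂ ∪ Y₂) :
      satPI γ D X Y := by
    refine satPI_of_le (m := 2 + r) (k := 1 + r) hγ0.le ?_ ?_ (by push_cast; linarith)
    · simp only [D, cntD_add, cntD_singleton, cntD_replicate]; split_ifs <;> omega
    · rcases hXY with hXY | hXY <;>
        simp only [D, cntD_add, cntD_singleton, cntD_replicate, if_pos hXY,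
          if_pos (hXY.trans subset_union_left), if_pos (hXY.trans subset_union_right)] <;>
        split_ifs <;> omega
  refine not_satPI_of_le (m := 1 + r) (k := r) hγ0.le ?_ ?_ (by push_cast; linarith)
    (h D (hsat (.inl (union_subset_union hX₁ (subset_refl Y₁)))) (hsat (.inr (subset_refl _))))
  · simp only [D, cntD_add, cntD_singleton, cntD_replicate, if_pos hX₀,
      if_pos (hX₀.trans subset_union_left)]
    split_ifs <;> omega
  · simp only [D, cntD_add, cntD_singleton, cntD_replicate, if_neg h₂,
      if_neg fun h' => hY₀ (subset_union_right.trans h')]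
    split_ifs <;> omega

theorem right_antecedent_subset_left (h : Entails₂ γ X₁ Y₁ X₂ Y₂ X₀ Y₀) (hγ0 : 0 < γ)
    (hγ1 : γ < 1) (hY₀ : ¬ Y₀ ⊆ X₀) (h₁ : ¬ X₀ ∪ Y₀ ⊆ X₁ ∪ Y₁) (h₂ : ¬ X₀ ∪ Y₀ ⊆ X₂ ∪ Y₂) :
    X₂ ⊆ X₁ ∪ Y₁ := by
  by_contra hX₂
  obtain ⟨r, -, hr⟩ := exists_nat_div_succ_lt_le hγ0 hγ1
  set D := {X₀} + Multiset.replicate ((r + 1) * (r + 2)) (X₁ ∪ Y₁) +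
    Multiset.replicate (r + 1) (X₂ ∪ Y₂)
  have hsat₁ : satPI γ D X₁ Y₁ := by
    refine satPI_of_le (m := 1 + (r + 1) * (r + 2) + (r + 1)) (k := (r + 1) * (r + 2))
      hγ0.le ?_ ?_ (by push_cast; nlinarith)
    · simp only [D, cntD_add, cntD_singleton, cntD_replicate]; split_ifs <;> omega
    · simp only [D, cntD_add, cntD_singleton, cntD_replicate, if_pos (subset_refl _)]
      split_ifs <;> omega
  have hsat₂ : satPI γ D X₂ Y₂ := by
    refine satPI_of_le (m := 1 + (r + 1)) (k := r + 1) hγ0.le ?_ ?_ (by push_cast; linarith)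
    · simp only [D, cntD_add, cntD_singleton, cntD_replicate, if_neg hX₂]; split_ifs <;> omega
    · simp only [D, cntD_add, cntD_singleton, cntD_replicate, if_pos (subset_refl _)]
      split_ifs <;> omega
  refine not_satPI_of_le (m := 1) (k := 0) hγ0.le ?_ ?_ (by simpa using hγ0) (h D hsat₁ hsat₂)
  · simp only [D, cntD_add, cntD_singleton, cntD_replicate, if_pos (subset_refl X₀)]; omega
  · simp only [D, cntD_add, cntD_singleton, cntD_replicate, if_neg h₁, if_neg h₂,
      if_neg fun h' => hY₀ (subset_union_right.trans h')]
    omega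

end Entails₂

theorem stmt2 {n : ℕ} (γ : ℝ) (hγ0 : 1/2 ≤ γ) (hγ1 : γ < 1)
    (X₀ Y₀ X₁ Y₁ X₂ Y₂ : Finset (Fin n)) :
    (∀ D : Multiset (Finset (Fin n)),
        satPI γ D X₁ Y₁ → satPI γ D X₂ Y₂ → satPI γ D X₀ Y₀) ↔
      (Y₀ ⊆ X₀ ∨
       (X₁ ⊆ X₀ ∧ X₀ ∪ Y₀ ⊆ X₁ ∪ Y₁) ∨
       (X₂ ⊆ X₀ ∧ X₀ ∪ Y₀ ⊆ X₂ ∪ Y₂) ∨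
       (X₁ ⊆ X₂ ∪ Y₂ ∧ X₂ ⊆ X₁ ∪ Y₁ ∧
        X₁ ⊆ X₀ ∧ X₂ ⊆ X₀ ∧
        X₀ ⊆ X₁ ∪ X₂ ∪ Y₁ ∪ Y₂ ∧
        Y₀ ⊆ X₀ ∪ Y₁ ∧ Y₀ ⊆ X₀ ∪ Y₂)) := by
  have hγ : 0 < γ := by linarith
  change Entails₂ γ X₁ Y₁ X₂ Y₂ X₀ Y₀ ↔ _
  constructor
  · intro h
    by_cases hY₀ : Y₀ ⊆ X₀
    · exact .inl hY₀
    by_cases h₁ : X₁ ⊆ X₀ ∧ X₀ ∪ Y₀ ⊆ X₁ ∪ Y₁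
    · exact .inr (.inl h₁)
    by_cases h₂ : X₂ ⊆ X₀ ∧ X₀ ∪ Y₀ ⊆ X₂ ∪ Y₂
    · exact .inr (.inr (.inl h₂))
    have hX₂ : X₂ ⊆ X₀ := (h.left_or_right_antecedent_subset hγ hY₀).elim
      (fun hX₁ => h.right_antecedent_subset hγ hγ1 hY₀ fun h' => h₁ ⟨hX₁, h'⟩) id
    have hX₁ : X₁ ⊆ X₀ := h.swap.right_antecedent_subset hγ hγ1 hY₀ fun h' => h₂ ⟨hX₂, h'⟩
    have hN₁ : ¬ X₀ ∪ Y₀ ⊆ X₁ ∪ Y₁ := fun h' => h₁ ⟨hX₁, h'⟩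
    have hN₂ : ¬ X₀ ∪ Y₀ ⊆ X₂ ∪ Y₂ := fun h' => h₂ ⟨hX₂, h'⟩
    exact .inr (.inr (.inr ⟨h.swap.right_antecedent_subset_left hγ hγ1 hY₀ hN₂ hN₁,
      h.right_antecedent_subset_left hγ hγ1 hY₀ hN₁ hN₂, hX₁, hX₂, h.subset_union hγ hγ1 hY₀,
      h.consequent_subset_left hγ hγ1 hX₁ hN₂, h.swap.consequent_subset_left hγ hγ1 hX₂ hN₁⟩))
  · rintro (hY₀ | ⟨hX, hXY⟩ | ⟨hX, hXY⟩ | ⟨h₁, h₂, h₃, h₄, h₅, h₆, h₇⟩) D hs₁ hs₂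
    · exact satPI_of_subset hγ1.le hY₀
    · exact hs₁.weaken hγ.le hX hXY
    · exact hs₂.weaken hγ.le hX hXY
    · exact satPI_of_two_premises hγ0 h₁ h₂ h₃ h₄ h₅ h₆ h₇ hs₁ hs₂
end

section
/- Let γ be a confidence parameter with 0 < γ < 1, let X₀ → Y₀, X₁ → Y₁, …, X_k → Y_k be partial implications over [n] with k ≥ 1, and assume that the entailment X₁ → Y₁, …, X_k → Y_k ⊨_γ X₀ → Y₀ holds properly. Then for every i ∈ [k], Y₀ ⊆ X₀Y_i (i.e., Y₀ ⊆ X₀ ∪ Y_i). -/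
open Finset

/-!
If `a ∈ Y₀ \ (X₀ ∪ Yᵢ)`, the transaction `Z = [n] \ {a}` violates `X₀ → Y₀` while it does not
violate `Xᵢ → Yᵢ`. Take a dataset `D` satisfying every premise except the `i`-th one and
violating `X₀ → Y₀`. Measuring each rule by its total weight `∑_{Z ∈ D} w_Z`, a suitable
combination `m • D + N • Z + M • [n]` repairs premise `i`, keeps the other premises, and still
violates `X₀ → Y₀`: copies of `Z` cost every rule at most `γ` and cost `X₀ → Y₀` exactly `γ`,
and copies of `[n]` pay `1 - γ` to all rules alike. So premise `i` can be dropped.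
-/

section WeightSum

variable {n : ℕ} (γ : ℝ)

noncomputable def wtSum (D : Multiset (Finset (Fin n))) (X Y : Finset (Fin n)) : ℝ :=
  (D.map fun Z => wt γ Z X Y).sum

variable (D E : Multiset (Finset (Fin n))) (X Y : Finset (Fin n))

lemma wtSum_add : wtSum γ (D + E) X Y = wtSum γ D X Y + wtSum γ E X Y := by
  simp [wtSum]

lemma wtSum_nsmul (m : ℕ) : wtSum γ (m • D) X Y = m * wtSum γ D X Y := by
  simp [wtSum, Multiset.map_nsmul, Multiset.sum_nsmul]

lemma wtSum_replicate (N : ℕ) (Z : Finset (Fin n)) :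
    wtSum γ (Multiset.replicate N Z) X Y = N * wt γ Z X Y := by
  simp [wtSum]

lemma wtSum_eq_cntD : wtSum γ D X Y = cntD D (X ∪ Y) - γ * cntD D X := by
  induction D using Multiset.induction with
  | empty => simp [wtSum, cntD]
  | cons Z D ih =>
    simp only [wtSum, cntD, Multiset.map_cons, Multiset.sum_cons, Multiset.filter_cons,
      Multiset.card_add] at ih ⊢
    rw [ih, wt]
    by_cases hXY : X ∪ Y ⊆ Z
    · simp only [hXY, union_subset_left hXY, ↓reduceIte, Multiset.card_singleton, Nat.cast_add,
        Nat.cast_one]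
      ring
    · by_cases hX : X ⊆ Z
      · simp only [hXY, hX, ↓reduceIte, Multiset.card_zero, Multiset.card_singleton, zero_add,
          Nat.cast_add, Nat.cast_one]
        ring
      · simp [hXY, hX]

lemma cntD_union_le : cntD D (X ∪ Y) ≤ cntD D X :=
  Multiset.card_le_card <| Multiset.monotone_filter_right D fun _ h => union_subset_left h

lemma satPI_iff_wtSum_nonneg : satPI γ D X Y ↔ 0 ≤ wtSum γ D X Y := by
  rw [satPI, wtSum_eq_cntD, sub_nonneg]
  refine ⟨?_, Or.inr⟩
  rintro (h | h)
  · have h' : cntD D (X ∪ Y) = 0 := Nat.le_zero.mp (h ▸ cntD_union_le D X Y)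
    simp [h, h']
  · exact h

end WeightSum

section Weight

variable {n : ℕ} {γ : ℝ} (X Y : Finset (Fin n))

lemma neg_le_wt (hγ : 0 ≤ γ) (Z : Finset (Fin n)) : -γ ≤ wt γ Z X Y := by
  unfold wt; split_ifs <;> linarith

lemma wt_univ : wt γ univ X Y = 1 - γ := by
  simp [wt]

lemma wt_univ_erase_of_mem {a : Fin n} (haX : a ∉ X) (haY : a ∈ Y) :
    wt γ (univ.erase a) X Y = -γ := by
  simp [wt, subset_erase, haX, haY]

lemma wt_univ_erase_nonneg (hγ : γ ≤ 1) {a : Fin n} (haY : a ∉ Y) :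
    0 ≤ wt γ (univ.erase a) X Y := by
  by_cases haX : a ∈ X
  · simp [wt, subset_erase, haX]
  · simp [wt, subset_erase, haX, haY, hγ]

end Weight

/-- Multiplicities `m`, `N`, `M` of `D`, of the violating transaction and of `[n]` in the repaired
dataset, where `a` and `b` are the weight sums in `D` of `X₀ → Y₀` and of the dropped premise. -/
lemma exists_repair_multiplicities {γ : ℝ} (hγ0 : 0 < γ) (hγ1 : γ < 1) {a : ℝ} (ha : a < 0)
    (b : ℝ) :
    ∃ m N M : ℕ, N * γ ≤ M * (1 - γ) ∧ m * a + M * (1 - γ) - N * γ < 0 ∧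
      0 ≤ m * b + M * (1 - γ) := by
  have h1γ : 0 < 1 - γ := sub_pos.mpr hγ1
  obtain ⟨m, hm⟩ := exists_nat_gt ((1 - γ) / -a)
  obtain ⟨N, hN⟩ := exists_nat_ge (m * |b| / γ)
  refine ⟨m, N, ⌈N * γ / (1 - γ)⌉₊, ?_, ?_, ?_⟩
  · exact (div_le_iff₀ h1γ).mp (Nat.le_ceil _)
  · have hM := (lt_div_iff₀ h1γ).mp <|
      (sub_lt_iff_lt_add.mpr (Nat.ceil_lt_add_one (by positivity)) : _ - 1 < N * γ / (1 - γ))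
    have hma := (div_lt_iff₀ (neg_pos.mpr ha)).mp hm
    linarith
  · have hM := (div_le_iff₀ h1γ).mp (Nat.le_ceil (N * γ / (1 - γ)))
    have hNγ := (div_le_iff₀ hγ0).mp hN
    have hb := neg_abs_le b
    nlinarith [(m.cast_nonneg : (0 : ℝ) ≤ m)]

theorem entailsFrom_erase_of_wt {n k : ℕ} {γ : ℝ} (hγ0 : 0 < γ) (hγ1 : γ < 1)
    {P : Fin k → Finset (Fin n) × Finset (Fin n)} {L : Finset (Fin k)} {X₀ Y₀ : Finset (Fin n)}
    {i : Fin k} (Z : Finset (Fin n)) (hent : entailsFrom γ P L X₀ Y₀)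
    (hZ₀ : wt γ Z X₀ Y₀ = -γ) (hZi : 0 ≤ wt γ Z (P i).1 (P i).2) :
    entailsFrom γ P (L.erase i) X₀ Y₀ := by
  intro D hD
  by_contra hD₀
  rw [satPI_iff_wtSum_nonneg, not_le] at hD₀
  obtain ⟨m, N, M, hNM, h₀, hi⟩ :=
    exists_repair_multiplicities hγ0 hγ1 hD₀ (wtSum γ D (P i).1 (P i).2)
  set D' := m • D + Multiset.replicate N Z + Multiset.replicate M univ
  have hD' : ∀ X Y, wtSum γ D' X Y = m * wtSum γ D X Y + N * wt γ Z X Y + M * (1 - γ) := by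
    intro X Y
    rw [wtSum_add, wtSum_add, wtSum_nsmul, wtSum_replicate, wtSum_replicate, wt_univ]
  have hsat : ∀ j ∈ L, satPI γ D' (P j).1 (P j).2 := by
    intro j hj
    rw [satPI_iff_wtSum_nonneg, hD']
    by_cases hji : j = i
    · subst hji
      have := mul_nonneg N.cast_nonneg hZi
      linarith
    · have hDj := (satPI_iff_wtSum_nonneg γ D _ _).mp (hD j (mem_erase.mpr ⟨hji, hj⟩))
      have := mul_nonneg m.cast_nonneg hDj
      have := mul_le_mul_of_nonneg_left (neg_le_wt (P j).1 (P j).2 hγ0.le Z) N.cast_nonneg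
      linarith
  have h₀' := (satPI_iff_wtSum_nonneg γ D' X₀ Y₀).mp (hent D' hsat)
  rw [hD', hZ₀] at h₀'
  linarith

theorem stmt10_general {n k : ℕ} (γ : ℝ) (hγ0 : 0 < γ) (hγ1 : γ < 1)
    (P : Fin k → Finset (Fin n) × Finset (Fin n)) (X₀ Y₀ : Finset (Fin n))
    (hproper : properFrom γ P Finset.univ X₀ Y₀) :
    ∀ i, Y₀ ⊆ X₀ ∪ (P i).2 := by
  intro i
  by_contra hsub
  obtain ⟨a, haY₀, ha⟩ := not_subset.mp hsub
  rw [mem_union, not_or] at ha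
  exact hproper.2 _ (erase_ssubset (mem_univ i)) <|
    entailsFrom_erase_of_wt hγ0 hγ1 (univ.erase a) hproper.1
      (wt_univ_erase_of_mem X₀ Y₀ ha.1 haY₀) (wt_univ_erase_nonneg _ _ hγ1.le ha.2)

theorem stmt10 {n k : ℕ} (γ : ℝ) (hγ0 : 0 < γ) (hγ1 : γ < 1) (hk : 1 ≤ k)
    (P : Fin k → Finset (Fin n) × Finset (Fin n)) (X₀ Y₀ : Finset (Fin n))
    (hproper : properFrom γ P Finset.univ X₀ Y₀) :
    ∀ i, Y₀ ⊆ X₀ ∪ (P i).2 :=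
  stmt10_general γ hγ0 hγ1 P X₀ Y₀ hproper
end
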